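/- arXiv:2411.11881 — 5 statements merged into one kernel-verified Lean document; each statement's English description precedes it below -/
import Mathlib

section
/- The sets A₂ and B are disjoint: A₂ ∩ B = ∅. -/
/-!
Eliminate the parameters: on both families `K² - 4χ` is linear in the parameters
(`10 - 6k` for Persson's surfaces, `4 - 4(m + 1)n` on `A₂`), so a common point forces
`3k = 2(m + 1)n + 3`. Substituting this into `2χ = (k - 1)(k - 2) + 2` leaves
`2n(m - 2)((2m - 1)n - 3) = 0`, impossible for `m ≥ 3` and `n ≥ 2`.
-/

def A2 : Set (ℤ × ℤ) :=
  {p | ∃ m n : ℤ, 3 ≤ m ∧ 2 ≤ n ∧ Even n ∧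
    p = (4 * m * n ^ 2 - 4 * (m + 2) * n + 8, m * n ^ 2 - n + 1)}

def B : Set (ℤ × ℤ) :=
  {p | ∃ n : ℤ, 4 ≤ n ∧ p = (2 * (n - 3) ^ 2, (n - 1) * (n - 2) / 2 + 1)}

lemma two_mul_persson_chi (k : ℤ) :
    2 * ((k - 1) * (k - 2) / 2 + 1) = (k - 1) * (k - 2) + 2 := by
  have hEven : Even ((k - 1) * (k - 2)) := by
    convert Int.even_mul_succ_self (k - 2) using 1
    ring
  rw [mul_add, Int.two_mul_ediv_two_of_even hEven, mul_one]

lemma three_mul_eq_of_invariants_eq {m n k : ℤ}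
    (hK : 4 * m * n ^ 2 - 4 * (m + 2) * n + 8 = 2 * (k - 3) ^ 2)
    (hχ : 2 * (m * n ^ 2 - n + 1) = (k - 1) * (k - 2) + 2) :
    3 * k = 2 * (m + 1) * n + 3 := by
  have h : 2 * (3 * k - (2 * (m + 1) * n + 3)) = 0 := by linear_combination hK - 2 * hχ
  linarith

lemma factor_eq_zero_of_invariants_eq {m n k : ℤ}
    (hK : 4 * m * n ^ 2 - 4 * (m + 2) * n + 8 = 2 * (k - 3) ^ 2)
    (hχ : 2 * (m * n ^ 2 - n + 1) = (k - 1) * (k - 2) + 2) :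
    n * (m - 2) * ((2 * m - 1) * n - 3) = 0 := by
  have hk := three_mul_eq_of_invariants_eq hK hχ
  have h : 2 * (n * (m - 2) * ((2 * m - 1) * n - 3)) = 0 := by
    linear_combination -9 * hχ - (3 * k + 2 * (m + 1) * n - 6) * hk
  simpa using h

theorem stmt_4 : A2 ∩ B = ∅ := by
  refine Set.eq_empty_of_forall_notMem ?_
  rintro _ ⟨⟨m, n, hm, hn, -, rfl⟩, k, -, hB⟩
  obtain ⟨hK, hχ⟩ := Prod.mk.inj hB
  have hχ₂ : 2 * (m * n ^ 2 - n + 1) = (k - 1) * (k - 2) + 2 := by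
    rw [hχ, two_mul_persson_chi]
  have hpos : 0 < n * (m - 2) * ((2 * m - 1) * n - 3) :=
    mul_pos (mul_pos (by omega) (by omega)) (by nlinarith)
  exact hpos.ne' (factor_eq_zero_of_invariants_eq hK hχ₂)
end

section
/- The sets A₁ and A₂ are disjoint: A₁ ∩ A₂ = ∅. -/
def A1 : Set (ℤ × ℤ) :=
  {p | ∃ n : ℤ, 2 ≤ n ∧ p = (4 * n ^ 2 - 12 * n + 9, n ^ 2 - n + 1)}

/-! The two families are already separated by the parity of `K²`: on `A1` it is the odd square
`(2n - 3)²`, on `A2` it is a multiple of `4`. -/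

theorem odd_fst_of_mem_A1 {p : ℤ × ℤ} (hp : p ∈ A1) : Odd p.1 := by
  obtain ⟨n, -, rfl⟩ := hp
  exact ⟨2 * n ^ 2 - 6 * n + 4, by ring⟩

theorem even_fst_of_mem_A2 {p : ℤ × ℤ} (hp : p ∈ A2) : Even p.1 := by
  obtain ⟨m, n, -, -, -, rfl⟩ := hp
  exact ⟨2 * (m * n ^ 2 - (m + 2) * n + 2), by ring⟩

theorem stmt_5 : A1 ∩ A2 = ∅ :=
  Set.eq_empty_of_forall_notMem fun _ ⟨h₁, h₂⟩ =>
    Int.not_odd_iff_even.mpr (even_fst_of_mem_A2 h₂) (odd_fst_of_mem_A1 h₁)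
end

section
/- The sets A₁ and A₃ are disjoint: A₁ ∩ A₃ = ∅. -/
def A3 : Set (ℤ × ℤ) :=
  {p | ∃ m n : ℤ, 2 ≤ m ∧ 4 ≤ n ∧ Even n ∧
    p = (2 * m * n ^ 2 - 4 * (m + 1) * n + 8, m * n * (n - 1) / 2 + 1)}

theorem even_fst_of_mem_A3 {p : ℤ × ℤ} (hp : p ∈ A3) : Even p.1 := by
  obtain ⟨m, n, -, -, -, rfl⟩ := hp
  exact ⟨m * n ^ 2 - 2 * (m + 1) * n + 4, by ring⟩

theorem stmt_6 : A1 ∩ A3 = ∅ :=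
  Set.eq_empty_of_forall_notMem fun _ ⟨h1, h3⟩ =>
    Int.not_even_iff_odd.mpr (odd_fst_of_mem_A1 h1) (even_fst_of_mem_A3 h3)
end

section
/- The set difference A₃ \ A₂ is infinite. -/
/-! The points `(16m - 8, 6m + 1)`, `m ≥ 2`, which make up the slice `n = 4` of `A₃`, all lie
outside `A₂`: eliminating `m` from the equations `(K², χ) = (16m - 8, 6m + 1)` for a point of `A₂`
with parameters `(a, b)` leaves `b (3a + 4 - ab) = 12`, so `b ∣ 12`, and no even divisor `b` of `12`
admits a solution with `a ≥ 3`. (The odd divisor `b = 3` would, for every `a`.) -/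

def a3SliceFour (m : ℤ) : ℤ × ℤ := (16 * m - 8, 6 * m + 1)

lemma a3SliceFour_injective : Function.Injective a3SliceFour := by
  intro m m' h
  simp only [a3SliceFour, Prod.mk.injEq] at h
  omega

lemma a3SliceFour_mem_A3 {m : ℤ} (hm : 2 ≤ m) : a3SliceFour m ∈ A3 := by
  refine ⟨m, 4, hm, le_rfl, even_iff_two_dvd.mpr (by norm_num), ?_⟩
  have hχ : m * 4 * (4 - 1) / 2 = 6 * m := by omega
  rw [a3SliceFour, hχ, Prod.mk.injEq]
  exact ⟨by ring, rfl⟩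

lemma eq_twelve_of_A2_param_eq_a3SliceFour {a b m : ℤ}
    (h : (4 * a * b ^ 2 - 4 * (a + 2) * b + 8, a * b ^ 2 - b + 1) = a3SliceFour m) :
    b * (3 * a + 4 - a * b) = 12 := by
  simp only [a3SliceFour, Prod.mk.injEq] at h
  have h4 : 4 * (b * (3 * a + 4 - a * b)) = 4 * 12 := by linear_combination 8 * h.2 - 3 * h.1
  omega

lemma not_even_of_mul_eq_twelve {a b : ℤ} (ha : 3 ≤ a) (hb : 2 ≤ b)
    (h : b * (3 * a + 4 - a * b) = 12) : ¬Even b := by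
  rintro ⟨r, hr⟩
  have hb12 : b ≤ 12 := Int.le_of_dvd (by norm_num) ⟨_, h.symm⟩
  interval_cases b <;> omega

lemma a3SliceFour_not_mem_A2 (m : ℤ) : a3SliceFour m ∉ A2 := by
  rintro ⟨a, b, ha, hb, hbe, h⟩
  exact not_even_of_mul_eq_twelve ha hb (eq_twelve_of_A2_param_eq_a3SliceFour h.symm) hbe

theorem stmt_12 : (A3 \ A2).Infinite := by
  refine ((Set.Ici_infinite (2 : ℤ)).image a3SliceFour_injective.injOn).mono ?_
  rintro _ ⟨m, hm, rfl⟩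
  exact ⟨a3SliceFour_mem_A3 hm, a3SliceFour_not_mem_A2 m⟩
end

section
/- The set difference A₂ \ A₃ is infinite. -/
/-!
The surfaces of Theorem 2 with `n = 2` have invariants `(K², χ) = (8m - 8, 4m - 1)`. Writing
`n = 2t` and `a = mt` for a surface of Theorem 3, equality of invariants gives two linear
equations in `a`; eliminating `a` leaves `(m - t)(2t - 3) = 0`, which forces `a = 2`.
This is impossible since `m, t ≥ 2`.
-/

theorem mk_mem_A2 {m : ℤ} (hm : 3 ≤ m) : (8 * m - 8, 4 * m - 1) ∈ A2 :=
  ⟨m, 2, hm, le_rfl, even_two, by ext <;> ring⟩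

theorem eq_two_of_linear_eqs {a t m : ℤ} (h₁ : a * (t - 1) = m + t - 2)
    (h₂ : a * (2 * t - 1) = 4 * m - 2) : a = 2 := by
  have ha : a = 2 * m - 2 * t + 2 := by linear_combination h₂ - 2 * h₁
  have hmt : (m - t) * (2 * t - 3) = 0 := by
    subst ha
    linear_combination h₁
  have ht : 2 * t - 3 ≠ 0 := by omega
  have : m = t := sub_eq_zero.mp ((mul_eq_zero.mp hmt).resolve_right ht)
  omega

theorem mk_notMem_A3 (m : ℤ) : (8 * m - 8, 4 * m - 1) ∉ A3 := by
  rintro ⟨m', _, hm', ht, ⟨t, rfl⟩, h⟩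
  simp only [Prod.mk.injEq] at h
  obtain ⟨hK, hχ⟩ := h
  have hdiv : m' * (t + t) * (t + t - 1) / 2 = m' * t * (2 * t - 1) := by
    rw [show m' * (t + t) * (t + t - 1) = 2 * (m' * t * (2 * t - 1)) by ring,
      Int.mul_ediv_cancel_left _ two_ne_zero]
  rw [hdiv] at hχ
  have ha : m' * t = 2 :=
    eq_two_of_linear_eqs (t := t) (m := m) (by linarith) (by linarith)
  nlinarith

theorem stmt_15 : (A2 \ A3).Infinite := by
  have hinj : Function.Injective fun m : ℤ => (8 * m - 8, 4 * m - 1) := fun a b h => by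
    simp only [Prod.mk.injEq] at h
    omega
  refine ((Set.Ici_infinite 3).image hinj.injOn).mono ?_
  rintro _ ⟨m, hm, rfl⟩
  exact ⟨mk_mem_A2 hm, mk_notMem_A3 m⟩
end
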